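/- A word w over alphabet Σ is CR-poor if and only if for every pair of distinct letters a, b ∈ Σ, w contains no complete return to ab (i.e., w has no factor of the form ab·x·ab where ab occurs exactly twice in it, as prefix and suffix). -/

import Mathlib

/-!
A closed factor of `w ++ [x]` that does not occur in `w` is a suffix, and the longest closed
suffix of `w ++ [x]` is always new, so every letter creates at least one closed factor. If some
`ab` with `a ≠ b` occurs twice, the letter completing its second occurrence creates two: the
complete return to `ab` and a second complete return ending there. If every such `ab` occurs
at most once, a border that occurs twice is a power `c ^ t` of the last letter. For two new
closed suffixes `u₁ ⊂ u₂`, the run of `c` ending `u₂` has length exactly `t`, which forces `u₁`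
to have the same border `c ^ t`, and then `u₁` yields an internal occurrence of `c ^ t` in `u₂`.
Finally, a complete return to `ab` exists exactly when `ab` occurs twice.
-/

variable {α : Type*}

/-- `u` is a factor (contiguous subword) of `w`. -/
def IsFactor (u w : List α) : Prop := ∃ v z : List α, w = v ++ u ++ z

/-- `u` is a border of `w`: a word different from `w` that is both a prefix and a suffix. -/
def IsBorder (u w : List α) : Prop := u ≠ w ∧ u <+: w ∧ u <:+ w

/-- `u` has an internal occurrence in `w`. -/
def HasInternalOcc (u w : List α) : Prop :=
  ∃ v z : List α, v ≠ [] ∧ z ≠ [] ∧ w = v ++ u ++ z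

/-- A word is closed if it is empty or has a border with no internal occurrence. -/
def ClosedWord (w : List α) : Prop :=
  w = [] ∨ ∃ u : List α, IsBorder u w ∧ ¬ HasInternalOcc u w

/-- The set of closed factors of `w`. -/
def closedFactors (w : List α) : Set (List α) := {u | IsFactor u w ∧ ClosedWord u}

/-- A word is CR-poor if it has exactly `|w| + 1` closed factors. -/
def IsCRPoor (w : List α) : Prop := (closedFactors w).ncard = w.length + 1

/-- `w` is a complete return to `u`: exactly two occurrences of `u` in `w`,
one as a prefix and one as a suffix. -/
def IsCompleteReturn (u w : List α) : Prop :=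
  u <+: w ∧ u <:+ w ∧ {i : ℕ | i + u.length ≤ w.length ∧ u <+: w.drop i}.ncard = 2

/-- The set of palindromic factors of `w`. -/
def palFactors (w : List α) : Set (List α) := {u | IsFactor u w ∧ u.reverse = u}

/-- `k`-fold concatenation power of a word. -/
def listPow (u : List α) : ℕ → List α
  | 0 => []
  | k + 1 => u ++ listPow u k

/-- A word is primitive if it is nonempty and not a power `u^k` with `k ≥ 2`. -/
def Primitive (v : List α) : Prop :=
  v ≠ [] ∧ ∀ (u : List α) (k : ℕ), 2 ≤ k → v ≠ listPow u k

/-- `p` is a period of `w`. -/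
def HasPeriod (w : List α) (p : ℕ) : Prop := 0 < p ∧ p ≤ w.length ∧ w.drop p <+: w

open List

def OccursAtMostOnce (u w : List α) : Prop :=
  ∀ i j, u <+: w.drop i → u <+: w.drop j → i = j

def newClosedFactors (w : List α) (x : α) : Set (List α) :=
  closedFactors (w ++ [x]) \ closedFactors w

theorem isFactor_iff_isInfix {u w : List α} : IsFactor u w ↔ u <:+: w :=
  ⟨fun ⟨s, t, h⟩ => ⟨s, t, h.symm⟩, fun ⟨s, t, h⟩ => ⟨s, t, h.symm⟩⟩

theorem isFactor_iff_exists_prefix_drop {u w : List α} : IsFactor u w ↔ ∃ i, u <+: w.drop i := by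
  constructor
  · rintro ⟨s, t, rfl⟩
    exact ⟨s.length, by rw [append_assoc, drop_left]; exact prefix_append _ _⟩
  · rintro ⟨i, t, ht⟩
    exact ⟨w.take i, t, by rw [append_assoc, ht, take_append_drop]⟩

theorem IsFactor.trans {u v w : List α} (huv : IsFactor u v) (hvw : IsFactor v w) :
    IsFactor u w :=
  isFactor_iff_isInfix.mpr ((isFactor_iff_isInfix.mp huv).trans (isFactor_iff_isInfix.mp hvw))

theorem add_length_le_of_prefix_drop {u w : List α} {i : ℕ} (h : u <+: w.drop i) (hu : u ≠ []) :
    i + u.length ≤ w.length := by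
  have := h.length_le
  have := length_pos_iff.mpr hu
  simp only [length_drop] at *
  omega

theorem prefix_drop_append {u w : List α} {k : ℕ} (t : List α) (h : u <+: w.drop k) :
    u <+: (w ++ t).drop k := by
  rw [drop_append]
  exact h.trans (prefix_append _ _)

theorem prefix_drop_add_of_prefix_drop {y u w : List α} {i k : ℕ} (hy : y <+: u.drop k)
    (hu : u <+: w.drop i) : y <+: w.drop (i + k) := by
  obtain ⟨t, ht⟩ := hu
  rw [← drop_drop, ← ht, drop_append]
  exact hy.trans (prefix_append _ _)

theorem prefix_drop_add_of_isSuffix {y u w : List α} {i : ℕ} (hy : y <:+ u) (hu : u <+: w.drop i) :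
    y <+: w.drop (i + (u.length - y.length)) :=
  prefix_drop_add_of_prefix_drop ⟨[], by rw [append_nil, ← suffix_iff_eq_drop.mp hy]⟩ hu

theorem prefix_drop_of_prefix_drop_append {u w t : List α} {k : ℕ} (h : u <+: (w ++ t).drop k)
    (hk : k + u.length ≤ w.length) : u <+: w.drop k := by
  rw [drop_append_of_le_length (by omega)] at h
  exact prefix_of_prefix_length_le h (prefix_append _ _) (by simp only [length_drop]; omega)

theorem prefix_drop_append_singleton_or {u w : List α} {x : α} {k : ℕ}
    (h : u <+: (w ++ [x]).drop k) :
    u <+: w.drop k ∨ (k + u.length = w.length + 1 ∧ u <:+ w ++ [x]) := by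
  by_cases hw : u <+: w.drop k
  · exact Or.inl hw
  have hu : u ≠ [] := by rintro rfl; exact hw nil_prefix
  have hlen : k + u.length = w.length + 1 := by
    have := add_length_le_of_prefix_drop h hu
    have := mt (prefix_drop_of_prefix_drop_append h) hw
    simp only [length_append, length_singleton] at *
    omega
  have heq : u = (w ++ [x]).drop k := h.eq_of_length (by simp only [length_drop, length_append, length_singleton]; omega)
  exact Or.inr ⟨hlen, heq ▸ drop_suffix _ _⟩

theorem OccursAtMostOnce.of_isFactor {u r w : List α} (h : OccursAtMostOnce u w)
    (hr : IsFactor r w) : OccursAtMostOnce u r := by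
  obtain ⟨s, t, rfl⟩ := hr
  intro i j hi hj
  have occ : ∀ {k}, u <+: r.drop k → u <+: (s ++ r ++ t).drop (s.length + k) := fun hk =>
    prefix_drop_add_of_prefix_drop hk (by rw [append_assoc, drop_left]; exact prefix_append _ _)
  have := h _ _ (occ hi) (occ hj)
  omega

theorem OccursAtMostOnce.of_isSuffix {y u w : List α} (h : OccursAtMostOnce y w) (hy : y <:+ u) :
    OccursAtMostOnce u w := fun i j hi hj => by
  have := h _ _ (prefix_drop_add_of_isSuffix hy hi) (prefix_drop_add_of_isSuffix hy hj)
  omega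

theorem OccursAtMostOnce.exists_of_not_append {u w : List α} {x : α} (h : OccursAtMostOnce u w)
    (h' : ¬ OccursAtMostOnce u (w ++ [x])) : (∃ i, u <+: w.drop i) ∧ u <:+ w ++ [x] := by
  simp only [OccursAtMostOnce, not_forall] at h'
  obtain ⟨i, j, hi, hj, hij⟩ := h'
  rcases prefix_drop_append_singleton_or hi with hi' | ⟨hi', hsuf⟩ <;>
    rcases prefix_drop_append_singleton_or hj with hj' | ⟨hj', hsuf'⟩
  · exact absurd (h i j hi' hj') hij
  · exact ⟨⟨i, hi'⟩, hsuf'⟩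
  · exact ⟨⟨j, hj'⟩, hsuf⟩
  · omega

theorem isCompleteReturn_take_drop {u w : List α} {i j : ℕ} (hu : u ≠ []) (hi : u <+: w.drop i)
    (hj : u <+: w.drop j) (hij : i < j) (hgap : ∀ k, i < k → k < j → ¬ u <+: w.drop k) :
    IsCompleteReturn u ((w.drop i).take (j - i + u.length)) := by
  set r := (w.drop i).take (j - i + u.length)
  have hjw := add_length_le_of_prefix_drop hj hu
  have hr : r.length = j - i + u.length := by simp only [r, length_take, length_drop]; omega
  have hrdrop : ∀ p, r.drop p <+: w.drop (i + p) := fun p => by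
    simp only [r, drop_take, drop_drop]
    exact take_prefix _ _
  have hlast : r.drop (j - i) = u := by
    simp only [r, drop_take, drop_drop, show i + (j - i) = j by omega,
      show j - i + u.length - (j - i) = u.length by omega]
    exact (prefix_iff_eq_take.mp hj).symm
  refine ⟨prefix_take_iff.mpr ⟨hi, by omega⟩, hlast ▸ drop_suffix _ _, ?_⟩
  have hocc : {p | p + u.length ≤ r.length ∧ u <+: r.drop p} = {0, j - i} := by
    ext p
    simp only [Set.mem_ofPred_eq, Set.mem_insert_iff, Set.mem_singleton_iff]
    constructor
    · rintro ⟨hp, hpu⟩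
      by_contra hne
      exact hgap (i + p) (by omega) (by omega) (hpu.trans (hrdrop p))
    · rintro (rfl | rfl)
      · exact ⟨by omega, prefix_take_iff.mpr ⟨hi, by omega⟩⟩
      · exact ⟨by omega, hlast ▸ prefix_refl _⟩
  rw [hocc, Set.ncard_pair (by omega)]

theorem exists_isCompleteReturn_iff {u w : List α} (hu : u ≠ []) :
    (∃ r, IsFactor r w ∧ IsCompleteReturn u r) ↔ ¬ OccursAtMostOnce u w := by
  constructor
  · rintro ⟨r, hr, -, -, hcard⟩ hw
    obtain ⟨p, q, hpq, hocc⟩ := Set.ncard_eq_two.mp hcard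
    have hmem : ∀ n ∈ ({p, q} : Set ℕ), u <+: r.drop n := fun n hn => (hocc ▸ hn).2
    exact hpq (hw.of_isFactor hr p q (hmem p (by simp)) (hmem q (by simp)))
  · intro hw
    simp only [OccursAtMostOnce, not_forall] at hw
    obtain ⟨i, j, hi, hj, hij⟩ := hw
    wlog hlt : i < j generalizing i j
    · exact this j i hj hi (Ne.symm hij) (by omega)
    classical
    have hex : ∃ k, i < k ∧ u <+: w.drop k := ⟨j, hlt, hj⟩
    obtain ⟨hik, hk⟩ := Nat.find_spec hex
    refine ⟨_, isFactor_iff_exists_prefix_drop.mpr ⟨i, take_prefix _ _⟩,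
      isCompleteReturn_take_drop hu hi hk hik fun k h₁ h₂ h₃ => Nat.find_min hex h₂ ⟨h₁, h₃⟩⟩

theorem closedWord_singleton (x : α) : ClosedWord [x] := by
  refine Or.inr ⟨[], ⟨by simp, nil_prefix, nil_suffix⟩, ?_⟩
  rintro ⟨v, z, hv, hz, h⟩
  have := congrArg length h
  have := length_pos_iff.mpr hv
  have := length_pos_iff.mpr hz
  simp only [length_append, length_singleton, length_nil] at *
  omega

/-- `v.drop i` is a complete return to `u`. -/
theorem closedWord_drop_of_forall_not_prefix_drop {u v : List α} {i : ℕ} (hi : u <+: v.drop i)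
    (hsuf : u <:+ v) (hlt : i + u.length < v.length)
    (hgap : ∀ k, i < k → k + u.length < v.length → ¬ u <+: v.drop k) :
    ClosedWord (v.drop i) := by
  have hlen : u.length < (v.drop i).length := by rw [length_drop]; omega
  refine Or.inr ⟨u, ⟨fun h => hlen.ne (h ▸ rfl), hi,
    suffix_of_suffix_length_le hsuf (drop_suffix _ _) hlen.le⟩, ?_⟩
  rintro ⟨p, q, hp, hq, hpq⟩
  have := congrArg length hpq
  have := length_pos_iff.mpr hp
  have := length_pos_iff.mpr hq
  simp only [length_append, length_drop] at *
  refine hgap (i + p.length) (by omega) (by omega) ?_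
  rw [← drop_drop, hpq, append_assoc, drop_left]
  exact prefix_append _ _

/-- The occurrence of `u` at `k` is the last one before its occurrence as a suffix. -/
theorem exists_closedWord_drop_of_prefix_drop {u v : List α} {i : ℕ} (hi : u <+: v.drop i)
    (hsuf : u <:+ v) (hlt : i + u.length < v.length) :
    ∃ k, i ≤ k ∧ k + u.length < v.length ∧ u <+: v.drop k ∧ ClosedWord (v.drop k) := by
  classical
  let P k := u <+: v.drop k ∧ k + u.length < v.length
  have hk : P (Nat.findGreatest P v.length) := Nat.findGreatest_spec (by omega) ⟨hi, hlt⟩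
  refine ⟨_, Nat.le_findGreatest (by omega) ⟨hi, hlt⟩, hk.2, hk.1,
    closedWord_drop_of_forall_not_prefix_drop hk.1 hsuf hk.2 fun k h₁ h₂ h₃ => ?_⟩
  exact Nat.findGreatest_is_greatest h₁ (by omega) ⟨h₃, h₂⟩

theorem closedFactors_finite (w : List α) : (closedFactors w).Finite :=
  w.sublists.finite_toSet.subset fun _ hu =>
    mem_sublists.mpr (isFactor_iff_isInfix.mp hu.1).sublist

theorem closedFactors_nil : closedFactors ([] : List α) = {[]} := by
  ext u
  simp only [closedFactors, isFactor_iff_isInfix, infix_nil, Set.mem_singleton_iff]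
  exact ⟨And.left, fun hu => ⟨hu, Or.inl hu⟩⟩

theorem ncard_closedFactors_append_singleton (w : List α) (x : α) :
    (closedFactors (w ++ [x])).ncard = (closedFactors w).ncard + (newClosedFactors w x).ncard := by
  have hsub : closedFactors w ⊆ closedFactors (w ++ [x]) := fun u hu =>
    ⟨hu.1.trans ⟨[], [x], rfl⟩, hu.2⟩
  rw [newClosedFactors, ← Set.ncard_sdiff_add_ncard_of_subset hsub (closedFactors_finite _),
    add_comm]

theorem newClosedFactors_finite (w : List α) (x : α) : (newClosedFactors w x).Finite :=
  (closedFactors_finite _).sdiff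

theorem mem_newClosedFactors {u w : List α} {x : α} :
    u ∈ newClosedFactors w x ↔ u <:+ w ++ [x] ∧ ClosedWord u ∧ ¬ IsFactor u w := by
  constructor
  · rintro ⟨⟨hf, hc⟩, hnew⟩
    have hf' : ¬ IsFactor u w := fun h => hnew ⟨h, hc⟩
    obtain ⟨k, hk⟩ := isFactor_iff_exists_prefix_drop.mp hf
    rcases prefix_drop_append_singleton_or hk with hw | ⟨-, hsuf⟩
    · exact absurd (isFactor_iff_exists_prefix_drop.mpr ⟨k, hw⟩) hf'
    · exact ⟨hsuf, hc, hf'⟩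
  · rintro ⟨hsuf, hc, hf⟩
    exact ⟨⟨isFactor_iff_isInfix.mpr hsuf.isInfix, hc⟩, fun h => hf h.1⟩

/-- The longest closed suffix of `w ++ [x]` is new. -/
theorem newClosedFactors_nonempty (w : List α) (x : α) : (newClosedFactors w x).Nonempty := by
  classical
  set v := w ++ [x]
  have hv : v.length = w.length + 1 := by simp [v]
  have hex : ∃ j, j < v.length ∧ ClosedWord (v.drop j) :=
    ⟨w.length, by omega, by simp only [v, drop_left]; exact closedWord_singleton x⟩
  obtain ⟨hj, hc⟩ := Nat.find_spec hex
  refine ⟨_, mem_newClosedFactors.mpr ⟨drop_suffix _ _, hc, fun hf => ?_⟩⟩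
  obtain ⟨i, hi⟩ := isFactor_iff_exists_prefix_drop.mp hf
  have hne : v.drop (Nat.find hex) ≠ [] := by simp only [ne_eq, drop_eq_nil_iff]; omega
  have hiw := add_length_le_of_prefix_drop hi hne
  obtain ⟨k, -, hk, -, hkc⟩ := exists_closedWord_drop_of_prefix_drop (prefix_drop_append _ hi)
    (drop_suffix _ _) (by simp only [length_append, length_singleton]; omega)
  simp only [length_drop] at hiw hk
  exact Nat.find_min hex (show k < Nat.find hex by omega) ⟨by omega, hkc⟩

theorem length_add_one_le_ncard_closedFactors (w : List α) :
    w.length + 1 ≤ (closedFactors w).ncard := by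
  induction w using reverseRecOn with
  | nil => simp [closedFactors_nil]
  | append_singleton w x ih =>
    have := (Set.ncard_pos (newClosedFactors_finite w x)).mpr (newClosedFactors_nonempty w x)
    rw [ncard_closedFactors_append_singleton, length_append, length_singleton]
    omega

theorem isChain_eq_of_prefix_drop {u v : List α} {i j : ℕ}
    (H : ∀ a b, a ≠ b → OccursAtMostOnce [a, b] v) (hi : u <+: v.drop i) (hj : u <+: v.drop j)
    (hij : i ≠ j) : IsChain (· = ·) u := by
  rw [isChain_iff_getElem]
  intro k hk
  by_contra hne
  have hpair : [u[k], u[k + 1]] <+: u.drop k := by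
    rw [drop_eq_getElem_cons (by omega), drop_eq_getElem_cons hk]
    exact ⟨u.drop (k + 2), rfl⟩
  have := H _ _ hne _ _ (prefix_drop_add_of_prefix_drop hpair hi)
    (prefix_drop_add_of_prefix_drop hpair hj)
  omega

theorem eq_replicate_of_isChain_of_isSuffix {β w : List α} {x : α} (hβ : IsChain (· = ·) β)
    (h : β <:+ w ++ [x]) : β = replicate β.length x := by
  rcases β.eq_nil_or_concat with rfl | ⟨β', y, rfl⟩
  · rfl
  obtain rfl : y = x := by
    obtain ⟨p, hp⟩ := h
    rw [concat_eq_append, ← append_assoc] at hp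
    simpa using (append_inj' hp rfl).2
  rw [isChain_iff_pairwise, concat_eq_append, pairwise_append] at hβ
  refine eq_replicate_iff.mpr ⟨rfl, fun z hz => ?_⟩
  rcases mem_append.mp (concat_eq_append ▸ hz) with hz | hz
  · exact hβ.2.2 z hz y (mem_singleton_self y)
  · exact mem_singleton.mp hz

theorem length_eq_of_replicate_succ_isSuffix {u : List α} {c : α} {t : ℕ}
    (hno : ¬ HasInternalOcc (replicate t c) u) (h : replicate (t + 1) c <:+ u) :
    u.length = t + 1 := by
  obtain ⟨p, rfl⟩ := h
  by_cases hp : p = []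
  · simp [hp]
  · exact absurd ⟨p, [c], hp, cons_ne_nil c [], by rw [replicate_succ', append_assoc]⟩ hno

theorem length_le_of_isSuffix_of_replicate_borders {u₁ u₂ : List α} {c : α} {s t : ℕ}
    (h₂suf : replicate t c <:+ u₂) (h₂ : ¬ HasInternalOcc (replicate t c) u₂)
    (h₁pre : replicate s c <+: u₁) (h₁suf : replicate s c <:+ u₁)
    (h₁ : ¬ HasInternalOcc (replicate s c) u₁) (h₁₂ : u₁ <:+ u₂) (ht : t < u₁.length) :
    u₂.length ≤ u₁.length := by
  by_contra! hlt
  have hrep : ∀ {m n}, m ≤ n → replicate m c <:+ replicate n c := fun {m n} h =>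
    ⟨replicate (n - m) c, by rw [← replicate_add]; congr 1; omega⟩
  have h₂run : ¬ replicate (t + 1) c <:+ u₂ := fun h => by
    have := length_eq_of_replicate_succ_isSuffix h₂ h
    omega
  have h₁t : replicate t c <:+ u₁ :=
    suffix_of_suffix_length_le h₂suf h₁₂ (by rw [length_replicate]; omega)
  obtain rfl : s = t := by
    rcases lt_trichotomy s t with hst | hst | hst
    · have := length_eq_of_replicate_succ_isSuffix h₁ ((hrep hst).trans h₁t)
      omega
    · exact hst
    · exact absurd (((hrep hst).trans h₁suf).trans h₁₂) h₂run
  obtain ⟨d, rfl⟩ := h₁₂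
  obtain ⟨q, rfl⟩ := h₁pre
  refine h₂ ⟨d, q, ?_, ?_, by rw [append_assoc]⟩
  · rintro rfl
    simp at hlt
  · rintro rfl
    simp at ht

theorem exists_replicate_border_of_mem_newClosedFactors {u w : List α} {x : α}
    (H : ∀ a b, a ≠ b → OccursAtMostOnce [a, b] (w ++ [x])) (hu : u ∈ newClosedFactors w x) :
    ∃ t, replicate t x <+: u ∧ replicate t x <:+ u ∧ ¬ HasInternalOcc (replicate t x) u ∧
      IsFactor (replicate t x) w := by
  obtain ⟨hsuf, hc, hnew⟩ := mem_newClosedFactors.mp hu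
  rcases hc with rfl | ⟨β, ⟨hne, hpre, hβsuf⟩, hno⟩
  · exact absurd ⟨[], w, rfl⟩ hnew
  obtain ⟨s, hs⟩ := hsuf
  have hlen := congrArg length hs
  have hlt : β.length < u.length :=
    lt_of_le_of_ne hpre.length_le fun h => hne (hpre.eq_of_length h)
  have hocc : u <+: (w ++ [x]).drop s.length := by rw [← hs, drop_left]
  have hocc₁ : β <+: (w ++ [x]).drop s.length := hpre.trans hocc
  have hocc₂ := prefix_drop_add_of_isSuffix hβsuf hocc
  obtain ⟨t, rfl⟩ : ∃ t, β = replicate t x := ⟨_, eq_replicate_of_isChain_of_isSuffix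
    (isChain_eq_of_prefix_drop H hocc₁ hocc₂ (by omega)) (hβsuf.trans ⟨s, hs⟩)⟩
  refine ⟨t, hpre, hβsuf, hno, isFactor_iff_exists_prefix_drop.mpr
    ⟨s.length, prefix_drop_of_prefix_drop_append hocc₁ ?_⟩⟩
  simp only [length_append, length_singleton] at hlen
  omega

theorem newClosedFactors_subsingleton {w : List α} {x : α}
    (H : ∀ a b, a ≠ b → OccursAtMostOnce [a, b] (w ++ [x])) :
    (newClosedFactors w x).Subsingleton := by
  intro u₁ h₁ u₂ h₂
  wlog hle : u₁.length ≤ u₂.length generalizing u₁ u₂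
  · exact (this h₂ h₁ (by omega)).symm
  obtain ⟨hsuf₁, -, hnew₁⟩ := mem_newClosedFactors.mp h₁
  have h₁₂ : u₁ <:+ u₂ := suffix_of_suffix_length_le hsuf₁ (mem_newClosedFactors.mp h₂).1 hle
  refine h₁₂.eq_of_length (le_antisymm hle ?_)
  obtain ⟨t, -, ht_suf, ht_no, ht_fac⟩ := exists_replicate_border_of_mem_newClosedFactors H h₂
  obtain ⟨s, hs_pre, hs_suf, hs_no, -⟩ := exists_replicate_border_of_mem_newClosedFactors H h₁
  refine length_le_of_isSuffix_of_replicate_borders ht_suf ht_no hs_pre hs_suf hs_no h₁₂ ?_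
  by_contra! hle'
  have : u₁ <:+ replicate t x := suffix_of_suffix_length_le h₁₂ ht_suf (by simpa using hle')
  exact hnew₁ ((isFactor_iff_isInfix.mpr this.isInfix).trans ht_fac)

theorem ncard_closedFactors_of_forall_occursAtMostOnce {w : List α}
    (H : ∀ a b, a ≠ b → OccursAtMostOnce [a, b] w) : (closedFactors w).ncard = w.length + 1 := by
  induction w using reverseRecOn with
  | nil => simp [closedFactors_nil]
  | append_singleton w x ih =>
    have hw := ih fun a b hab => (H a b hab).of_isFactor ⟨[], [x], by simp⟩
    have hle := (Set.ncard_le_one (newClosedFactors_finite w x)).mpr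
      fun _ h₁ _ h₂ => newClosedFactors_subsingleton H h₁ h₂
    have hpos := (Set.ncard_pos (newClosedFactors_finite w x)).mpr (newClosedFactors_nonempty w x)
    rw [ncard_closedFactors_append_singleton, length_append, length_singleton]
    omega

theorem drop_mem_newClosedFactors {u w : List α} {x : α} {i : ℕ} (hu : u ≠ [])
    (honce : OccursAtMostOnce u w) (hi : u <+: w.drop i) (hsuf : u <:+ w ++ [x]) :
    (w ++ [x]).drop i ∈ newClosedFactors w x := by
  have hiw := add_length_le_of_prefix_drop hi hu
  have hi' := prefix_drop_append [x] hi
  have hv : (w ++ [x]).length = w.length + 1 := by simp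
  refine mem_newClosedFactors.mpr ⟨drop_suffix _ _, ?_, fun hf => ?_⟩
  · refine closedWord_drop_of_forall_not_prefix_drop hi' hsuf (by omega) fun k hik hk hocc => ?_
    have := honce _ _ hi (prefix_drop_of_prefix_drop_append hocc (by omega))
    omega
  · obtain ⟨s, hs⟩ := isFactor_iff_exists_prefix_drop.mp hf
    have hsuf' : u <:+ (w ++ [x]).drop i :=
      suffix_of_suffix_length_le hsuf (drop_suffix _ _) (by rw [length_drop]; omega)
    have := honce _ _ (hi'.trans hs) (prefix_drop_add_of_isSuffix hsuf' hs)
    rw [length_drop] at this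
    omega

/-- The second new closed factor is either the complete return `z` to `b` ending `w ++ [x]`, or,
if `z` already occurs in `w`, the complete return to `z` ending `w ++ [x]`. -/
theorem exists_mem_newClosedFactors_ne_drop {w : List α} {x a b : α} {i : ℕ} (hab : a ≠ b)
    (honce : OccursAtMostOnce [a, b] w) (hi : [a, b] <+: w.drop i) (hsuf : [a, b] <:+ w ++ [x]) :
    ∃ z ∈ newClosedFactors w x, z ≠ (w ++ [x]).drop i := by
  set v := w ++ [x]
  have hv : v.length = w.length + 1 := by simp [v]
  have hiw := add_length_le_of_prefix_drop hi (cons_ne_nil a [b])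
  have hb : [b] <+: v.drop (i + 1) :=
    prefix_drop_append [x] (prefix_drop_add_of_prefix_drop (u := [a, b]) (prefix_refl [b]) hi)
  obtain ⟨p, hip, hpv, hbp, hzc⟩ := exists_closedWord_drop_of_prefix_drop hb
    ((suffix_cons a [b]).trans hsuf) (by simp only [length_cons, length_nil] at hiw ⊢; omega)
  have hp : p + 3 ≤ v.length := by
    by_contra h
    have hlast : v.drop p = [a, b] := by
      rw [suffix_iff_eq_drop.mp hsuf, show p = v.length - 2 by simp only [length_singleton] at hpv; omega]; rfl
    rw [hlast] at hbp
    have : b = a := by simpa using hbp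
    exact hab this.symm
  have hzab : [a, b] <:+ v.drop p :=
    suffix_of_suffix_length_le hsuf (drop_suffix _ _) (by simp only [length_drop, length_cons, length_nil]; omega)
  by_cases hzw : IsFactor (v.drop p) w
  · obtain ⟨s, hs⟩ := isFactor_iff_exists_prefix_drop.mp hzw
    have hsi := honce _ _ hi (prefix_drop_add_of_isSuffix hzab hs)
    have hz : v.drop p ≠ [] := by simp only [ne_eq, drop_eq_nil_iff]; omega
    refine ⟨v.drop s, drop_mem_newClosedFactors hz (honce.of_isSuffix hzab) hs (drop_suffix _ _),
      fun h => ?_⟩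
    have := congrArg length h
    simp only [length_drop, length_cons, length_nil] at this hsi
    omega
  · refine ⟨v.drop p, mem_newClosedFactors.mpr ⟨drop_suffix _ _, hzc, hzw⟩, fun h => ?_⟩
    have := congrArg length h
    simp only [length_drop] at this
    omega

theorem one_lt_ncard_newClosedFactors {w : List α} {x a b : α} (hab : a ≠ b)
    (honce : OccursAtMostOnce [a, b] w) (htwice : ¬ OccursAtMostOnce [a, b] (w ++ [x])) :
    1 < (newClosedFactors w x).ncard := by
  obtain ⟨⟨i, hi⟩, hsuf⟩ := honce.exists_of_not_append htwice
  obtain ⟨z, hz, hne⟩ := exists_mem_newClosedFactors_ne_drop hab honce hi hsuf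
  exact (Set.one_lt_ncard (newClosedFactors_finite w x)).mpr
    ⟨_, drop_mem_newClosedFactors (cons_ne_nil a [b]) honce hi hsuf, z, hz, hne.symm⟩

theorem length_add_two_le_ncard_closedFactors {w : List α} {a b : α} (hab : a ≠ b)
    (h : ¬ OccursAtMostOnce [a, b] w) : w.length + 2 ≤ (closedFactors w).ncard := by
  induction w using reverseRecOn with
  | nil => exact absurd (fun i j hi => by simp at hi) h
  | append_singleton w x ih =>
    rw [ncard_closedFactors_append_singleton, length_append, length_singleton]
    by_cases hw : OccursAtMostOnce [a, b] w
    · have := one_lt_ncard_newClosedFactors hab hw h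
      have := length_add_one_le_ncard_closedFactors w
      omega
    · have := (Set.ncard_pos (newClosedFactors_finite w x)).mpr (newClosedFactors_nonempty w x)
      have := ih hw
      omega

/-- A word w is CR-poor iff for every pair of distinct letters a, b,
w contains no complete return to ab as a factor. -/
theorem stmt_13 {α : Type*} (w : List α) :
    IsCRPoor w ↔
      ∀ a b : α, a ≠ b → ¬ ∃ r : List α, IsFactor r w ∧ IsCompleteReturn [a, b] r := by
  simp only [exists_isCompleteReturn_iff (cons_ne_nil _ _), not_not]
  refine ⟨fun hpoor a b hab => ?_, ncard_closedFactors_of_forall_occursAtMostOnce⟩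
  by_contra h
  have := length_add_two_le_ncard_closedFactors hab h
  rw [IsCRPoor] at hpoor
  omega
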